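/- Let u, v, u', v' be words such that u ∼_{k-1} u' but u is not k-binomially equivalent to u', and v ∼_k v'. Then u·v is not k-binomially equivalent to u'·v'. -/

import Mathlib

/-- Number of occurrences of the second word as a (scattered) subword of the first. -/
def binom {α : Type*} [DecidableEq α] : List α → List α → ℕ
  | _, [] => 1
  | [], _ :: _ => 0
  | a :: u, b :: v => binom u (b :: v) + if a = b then binom u v else 0

/-- k-binomial equivalence. -/
def BinEq {α : Type*} [DecidableEq α] (k : ℕ) (u v : List α) : Prop :=
  ∀ x : List α, x.length ≤ k → binom u x = binom v x

/-!
Splitting an occurrence of `x` in `u v` at the point where it leaves `u` gives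
`binom (u ++ v) x = ∑ₙ binom u (x.take n) * binom v (x.drop n)`. When `|x| ≤ k`, every summand
except the last one (`n = |x|`, equal to `binom u x`) only involves subwords of `u` of length
`< k` and subwords of `v` of length `≤ k`, so it does not change when `u, v` are replaced by
`k-1`- resp. `k`-binomially equivalent words `u', v'`. Hence
`binom (u ++ v) x - binom u x = binom (u' ++ v') x - binom u' x`, and a word `x` separating
`u` from `u'` also separates `u v` from `u' v'`.
-/

section Binom

variable {α : Type*} [DecidableEq α]

@[simp]
lemma binom_nil_right (u : List α) : binom u [] = 1 := by
  cases u <;> rfl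

@[simp]
lemma binom_nil_cons (b : α) (x : List α) : binom [] (b :: x) = 0 := rfl

@[simp]
lemma binom_cons_cons (a b : α) (u x : List α) :
    binom (a :: u) (b :: x) = binom u (b :: x) + if a = b then binom u x else 0 := rfl

lemma binom_append (u v x : List α) :
    binom (u ++ v) x =
      ∑ n ∈ Finset.range (x.length + 1), binom u (x.take n) * binom v (x.drop n) := by
  induction u generalizing x with
  | nil =>
    cases x with
    | nil => simp
    | cons b x => simp [Finset.sum_range_succ']
  | cons a u ih =>
    cases x with
    | nil => simp
    | cons b x =>
      rw [List.cons_append, binom_cons_cons, ih, ih]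
      simp only [List.length_cons, Finset.sum_range_succ' _ (x.length + 1)]
      split_ifs with hab
      · simp only [hab, if_true, List.take_succ_cons, List.drop_succ_cons, List.take_zero,
          List.drop_zero, binom_nil_right, binom_cons_cons, add_mul, Finset.sum_add_distrib]
        ring
      · simp [hab]

lemma binom_append_add_binom_of_binEq {k : ℕ} {u v u' v' : List α}
    (hu : BinEq (k - 1) u u') (hv : BinEq k v v') {x : List α} (hx : x.length ≤ k) :
    binom (u ++ v) x + binom u' x = binom (u' ++ v') x + binom u x := by
  have hlower : ∑ n ∈ Finset.range x.length, binom u (x.take n) * binom v (x.drop n)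
      = ∑ n ∈ Finset.range x.length, binom u' (x.take n) * binom v' (x.drop n) := by
    refine Finset.sum_congr rfl fun n hn => ?_
    rw [Finset.mem_range] at hn
    rw [hu _ (by simp; omega), hv _ (by simp; omega)]
  simp only [binom_append, Finset.sum_range_succ, hlower, List.take_length, List.drop_length,
    binom_nil_right, mul_one]
  ring

end Binom

theorem binEq_append_not {α : Type*} [DecidableEq α] (k : ℕ) (u v u' v' : List α)
    (h₁ : BinEq (k - 1) u u') (h₂ : ¬ BinEq k u u') (h₃ : BinEq k v v') :
    ¬ BinEq k (u ++ v) (u' ++ v') := by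
  intro hk
  obtain ⟨x, hx, hne⟩ : ∃ x : List α, x.length ≤ k ∧ binom u x ≠ binom u' x := by
    simpa [BinEq] using h₂
  have key := binom_append_add_binom_of_binEq h₁ h₃ hx
  rw [hk x hx] at key
  exact hne (by omega)
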